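/- arXiv:1103.3775 — 2 statements merged into one kernel-verified Lean document; each statement's English description precedes it below -/
import Mathlib

section
/- Let f : L⁰(F,ℝ) → L⁰(F,ℝ) be a local function that is continuous when L⁰(F,ℝ) is endowed with the topology of convergence in probability P, and let Y₁, Y₂ ∈ L⁰(F,ℝ) with Y₁ ≤ Y₂. Then for every ξ ∈ [f(Y₁) ∧ f(Y₂), f(Y₁) ∨ f(Y₂)] there exists η ∈ [Y₁, Y₂] such that f(η) = ξ. -/
open MeasureTheory Filter Set

noncomputable section

namespace RNM

variable {Ω : Type*} [MeasurableSpace Ω]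

/-- `L⁰(F, ℝ)`: equivalence classes of real random variables mod a.e. equality. -/
abbrev L0 (μ : Measure Ω) : Type _ := Ω →ₘ[μ] ℝ

open Classical in
/-- The equivalence class of the indicator function of a (measurable) set. -/
noncomputable def ind (μ : Measure Ω) (A : Set Ω) : L0 μ :=
  if h : MeasurableSet A then
    AEEqFun.mk (A.indicator fun _ => (1 : ℝ)) (aestronglyMeasurable_const.indicator h)
  else 0

/-- The constant function, as an element of `L⁰`. -/
noncomputable def cst (μ : Measure Ω) (r : ℝ) : L0 μ := AEEqFun.const Ω r

/-- `A ⊂ B` modulo null sets. -/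
def aeSub (μ : Measure Ω) (A B : Set Ω) : Prop := μ (A \ B) = 0

/-- `A = B` modulo null sets. -/
def aeEqS (μ : Measure Ω) (A B : Set Ω) : Prop := μ ((A \ B) ∪ (B \ A)) = 0

variable {μ : Measure Ω} {S : Type*} [AddCommGroup S]

/-- The axioms of a random normed module over ℝ with base `(Ω, F, μ)`: `S` is a left module
over the algebra `L⁰(F,ℝ)` (with module multiplication `sm`) and `nrm` is an `L⁰`-norm. -/
structure IsRNModule (μ : Measure Ω) (sm : L0 μ → S → S) (nrm : S → L0 μ) : Prop where
  smul_add : ∀ ξ x y, sm ξ (x + y) = sm ξ x + sm ξ y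
  add_smul : ∀ ξ η x, sm (ξ + η) x = sm ξ x + sm η x
  mul_smul : ∀ ξ η x, sm (ξ * η) x = sm ξ (sm η x)
  one_smul : ∀ x, sm 1 x = x
  nrm_nonneg : ∀ x, 0 ≤ nrm x
  nrm_smul : ∀ ξ x, nrm (sm ξ x) = |ξ| * nrm x
  nrm_add : ∀ x y, nrm (x + y) ≤ nrm x + nrm y
  nrm_eq_zero : ∀ x, nrm x = 0 → x = 0

/-- `x` and `y` are `L⁰`-independent on `F`. -/
def Indep (sm : L0 μ → S → S) (x y : S) (F : Set Ω) : Prop :=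
  ∀ ξ η : L0 μ, sm (ξ * ind μ F) x + sm (η * ind μ F) y = 0 →
    ξ * ind μ F = 0 ∧ η * ind μ F = 0

/-- `Rank_D(S) ≥ 2`. -/
def RankGe2 (sm : L0 μ → S → S) (D : Set Ω) : Prop := ∃ x y : S, Indep sm x y D

/-- `A_x = [‖x‖ > 0]`. -/
def Aset (nrm : S → L0 μ) (x : S) : Set Ω := {ω | 0 < (nrm x) ω}

/-- `A_{xy} = A_x ∩ A_y`. -/
def Axy (nrm : S → L0 μ) (x y : S) : Set Ω := Aset nrm x ∩ Aset nrm y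

/-- `B_{xy} = A_{xy} ∩ A_{x-y}`. -/
def Bxy (nrm : S → L0 μ) (x y : S) : Set Ω := Axy nrm x y ∩ Aset nrm (x - y)

/-- `H` is (a representative of) the support `H(S) = [⋁{‖x‖ : x ∈ S} > 0]`. -/
def IsSupport (nrm : S → L0 μ) (H : Set Ω) : Prop :=
  MeasurableSet H ∧ (∀ x : S, aeSub μ (Aset nrm x) H) ∧
    ∀ B : Set Ω, MeasurableSet B → aeSub μ B H → 0 < μ B →
      ∃ x : S, 0 < μ (B ∩ Aset nrm x)

/-- A sequence in `S` is Cauchy for the topology of convergence in probability. -/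
def CauchyInProb (μ : Measure Ω) (nrm : S → L0 μ) (u : ℕ → S) : Prop :=
  ∀ ε : ℝ, 0 < ε →
    Tendsto (fun p : ℕ × ℕ => μ {ω | ε ≤ |(nrm (u p.1 - u p.2)) ω|}) atTop (nhds 0)

/-- `u n → x` in probability (i.e. `‖u n - x‖ → 0` in probability). -/
def TendstoInProb (μ : Measure Ω) (nrm : S → L0 μ) (u : ℕ → S) (x : S) : Prop :=
  ∀ ε : ℝ, 0 < ε →
    Tendsto (fun n => μ {ω | ε ≤ |(nrm (u n - x)) ω|}) atTop (nhds 0)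

/-- Completeness of a random normed module. -/
def CompleteRN (μ : Measure Ω) (nrm : S → L0 μ) : Prop :=
  ∀ u : ℕ → S, CauchyInProb μ nrm u → ∃ x : S, TendstoInProb μ nrm u x

/-- The random unit sphere `S(1)`. -/
def sphere (nrm : S → L0 μ) : Set S :=
  {x | ∃ A : Set Ω, MeasurableSet A ∧ 0 < μ A ∧ nrm x = ind μ A}

/-- The random closed unit ball `U(1)`. -/
def ball (nrm : S → L0 μ) : Set S := {x | nrm x ≤ 1}

/-- `ε` is an admissible random convexity parameter on `D`: `ε ≥ 0` and `0 < ε ≤ 2` on `D`. -/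
def Admissible (μ : Measure Ω) (D : Set Ω) (ε : L0 μ) : Prop :=
  0 ≤ ε ∧ ∀ᵐ ω ∂μ, ω ∈ D → 0 < ε ω ∧ ε ω ≤ 2

/-- midpoint `(x+y)/2`. -/
def mid (μ : Measure Ω) (sm : L0 μ → S → S) (x y : S) : S := sm (cst μ (1/2)) (x + y)

/-- The set whose infimum (in the a.s. order of `L⁰`) is the modulus of random
convexity `δ_D(ε)`. -/
def modSet (μ : Measure Ω) (sm : L0 μ → S → S) (nrm : S → L0 μ) (D : Set Ω) (ε : L0 μ) :
    Set (L0 μ) :=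
  {z | ∃ x ∈ sphere nrm, ∃ y ∈ sphere nrm, aeSub μ D (Bxy nrm x y) ∧
    ε * ind μ D ≤ ind μ D * nrm (x - y) ∧
    z = ind μ D - ind μ D * nrm (mid μ sm x y)}

/-- `S` is random uniformly convex: `δ_{H(S)}(ε) > 0` on `H(S)` for every admissible `ε`. -/
def RandomUniformlyConvex (μ : Measure Ω) (sm : L0 μ → S → S) (nrm : S → L0 μ)
    (H : Set Ω) : Prop :=
  ∀ ε : L0 μ, Admissible μ H ε → ∀ d : L0 μ, IsGLB (modSet μ sm nrm H ε) d →
    ∀ᵐ ω ∂μ, ω ∈ H → 0 < d ω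

/-- `G` is (a representative of) `G(S)`. -/
def IsGSet (μ : Measure Ω) (sm : L0 μ → S → S) (H G : Set Ω) : Prop :=
  MeasurableSet G ∧ aeSub μ G H ∧ 0 < μ G ∧ RankGe2 sm G ∧
    ∀ D : Set Ω, MeasurableSet D → aeSub μ D (H \ G) → 0 < μ D → ¬ RankGe2 sm D


/-- `u n → x` in probability, in `L⁰(F,ℝ)`. -/
def L0TendstoInProb (μ : Measure Ω) (u : ℕ → L0 μ) (x : L0 μ) : Prop :=
  ∀ ε : ℝ, 0 < ε → Tendsto (fun n => μ {ω | ε ≤ |u n ω - x ω|}) atTop (nhds 0)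

/-!
The proof is a bisection carried out event by event. If `ξ` lies between `f a` and `f b`, then on
the event where it lies between `f a` and `f m` (`m` the midpoint) one keeps `[a, m]`, elsewhere
`[m, b]`; since a local `f` commutes with gluing along events, `ξ` still lies between the values of
`f` at the new end points. The nested random intervals shrink a.s. to some `η`, continuity gives
`f aₙ → f η` and `f bₙ → f η` in probability, and along an a.s. convergent subsequence `ξ` is
squeezed to `f η`.
-/

open Topology

lemma coeFn_ind {A : Set Ω} (hA : MeasurableSet A) :
    ⇑(ind μ A) =ᵐ[μ] A.indicator 1 := by
  rw [ind, dif_pos hA]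
  exact AEEqFun.coeFn_mk _ _

lemma ind_mul_eq_ind_mul_iff {A : Set Ω} (hA : MeasurableSet A) {x y : L0 μ} :
    ind μ A * x = ind μ A * y ↔ ∀ᵐ ω ∂μ, ω ∈ A → x ω = y ω := by
  rw [AEEqFun.ext_iff]
  refine Filter.eventually_congr ?_
  filter_upwards [AEEqFun.coeFn_mul (ind μ A) x, AEEqFun.coeFn_mul (ind μ A) y, coeFn_ind hA]
    with ω hx hy hind
  by_cases hω : ω ∈ A <;> simp [hx, hy, hind, hω]

def glue (μ : Measure Ω) (A : Set Ω) (x y : L0 μ) : L0 μ := ind μ A * x + ind μ Aᶜ * y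

open Classical in
lemma coeFn_glue {A : Set Ω} (hA : MeasurableSet A) (x y : L0 μ) :
    ⇑(glue μ A x y) =ᵐ[μ] A.piecewise x y := by
  filter_upwards [AEEqFun.coeFn_add (ind μ A * x) (ind μ Aᶜ * y), AEEqFun.coeFn_mul (ind μ A) x,
    AEEqFun.coeFn_mul (ind μ Aᶜ) y, coeFn_ind hA, coeFn_ind hA.compl] with ω h hx hy hA' hAc
  by_cases hω : ω ∈ A <;> simp [glue, h, hx, hy, hA', hAc, hω]

lemma ind_mul_glue {A : Set Ω} (hA : MeasurableSet A) (x y : L0 μ) :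
    ind μ A * glue μ A x y = ind μ A * x := by
  classical
  refine (ind_mul_eq_ind_mul_iff hA).2 ?_
  filter_upwards [coeFn_glue hA x y] with ω h hω
  simp [h, hω]

lemma ind_compl_mul_glue {A : Set Ω} (hA : MeasurableSet A) (x y : L0 μ) :
    ind μ Aᶜ * glue μ A x y = ind μ Aᶜ * y := by
  classical
  refine (ind_mul_eq_ind_mul_iff hA.compl).2 ?_
  filter_upwards [coeFn_glue hA x y] with ω h hω
  simp [h, Set.notMem_of_mem_compl hω]

def IsLocal (f : L0 μ → L0 μ) : Prop :=
  ∀ A : Set Ω, MeasurableSet A → ∀ x : L0 μ, ind μ A * f x = ind μ A * f (ind μ A * x)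

lemma IsLocal.map_glue {f : L0 μ → L0 μ} (hf : IsLocal f) {A : Set Ω} (hA : MeasurableSet A)
    (x y : L0 μ) : f (glue μ A x y) = glue μ A (f x) (f y) := by
  classical
  have hon : ∀ᵐ ω ∂μ, ω ∈ A → f (glue μ A x y) ω = f x ω :=
    (ind_mul_eq_ind_mul_iff hA).1 (by rw [hf A hA, ind_mul_glue hA, ← hf A hA])
  have hoff : ∀ᵐ ω ∂μ, ω ∈ Aᶜ → f (glue μ A x y) ω = f y ω :=
    (ind_mul_eq_ind_mul_iff hA.compl).1
      (by rw [hf Aᶜ hA.compl, ind_compl_mul_glue hA, ← hf Aᶜ hA.compl])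
  rw [AEEqFun.ext_iff]
  filter_upwards [hon, hoff, coeFn_glue hA (f x) (f y)] with ω hωon hωoff h
  by_cases hω : ω ∈ A
  · simp [h, hω, hωon hω]
  · simp [h, hω, hωoff hω]

lemma ae_eq_of_mem_uIcc_of_tendstoInMeasure {u v : ℕ → Ω → ℝ} {g z : Ω → ℝ}
    (hu : TendstoInMeasure μ u atTop z) (hv : TendstoInMeasure μ v atTop z)
    (hg : ∀ n, ∀ᵐ ω ∂μ, g ω ∈ uIcc (u n ω) (v n ω)) : g =ᵐ[μ] z := by
  obtain ⟨ns, hns, hu_ae⟩ := hu.exists_seq_tendsto_ae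
  obtain ⟨ms, hms, hv_ae⟩ := (hv.comp hns.tendsto_atTop).exists_seq_tendsto_ae
  filter_upwards [hu_ae, hv_ae, ae_all_iff.2 hg] with ω huω hvω hgω
  have huω' := huω.comp hms.tendsto_atTop
  have hmax := huω'.max hvω
  have hmin := huω'.min hvω
  rw [max_self] at hmax
  rw [min_self] at hmin
  exact le_antisymm (ge_of_tendsto' hmax fun k => (hgω _).2)
    (le_of_tendsto' hmin fun k => (hgω _).1)

lemma L0TendstoInProb_iff {u : ℕ → L0 μ} {x : L0 μ} :
    L0TendstoInProb μ u x ↔ TendstoInMeasure μ (fun n => ⇑(u n)) atTop ⇑x := by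
  simp only [L0TendstoInProb, tendstoInMeasure_iff_dist, Real.dist_eq]

lemma L0TendstoInProb_of_ae_tendsto [IsFiniteMeasure μ] {u : ℕ → L0 μ} {x : L0 μ}
    (h : ∀ᵐ ω ∂μ, Tendsto (fun n => u n ω) atTop (𝓝 (x ω))) : L0TendstoInProb μ u x :=
  L0TendstoInProb_iff.2 (tendstoInMeasure_of_tendsto_ae (fun n => (u n).aestronglyMeasurable) h)

def Brackets (f : L0 μ → L0 μ) (ξ a b : L0 μ) : Prop :=
  a ≤ b ∧ ∀ᵐ ω ∂μ, ξ ω ∈ uIcc (f a ω) (f b ω)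

lemma brackets_of_le {f : L0 μ → L0 μ} {ξ a b : L0 μ} (hab : a ≤ b) (h₁ : f a ⊓ f b ≤ ξ)
    (h₂ : ξ ≤ f a ⊔ f b) : Brackets f ξ a b := by
  refine ⟨hab, ?_⟩
  filter_upwards [AEEqFun.coeFn_le.2 h₁, AEEqFun.coeFn_le.2 h₂, AEEqFun.coeFn_inf (f a) (f b),
    AEEqFun.coeFn_sup (f a) (f b)] with ω h₁ω h₂ω hinf hsup
  exact ⟨hinf ▸ h₁ω, hsup ▸ h₂ω⟩

lemma coeFn_midpoint (a b : L0 μ) :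
    ∀ᵐ ω ∂μ, ((2 : ℝ)⁻¹ • (a + b)) ω = (a ω + b ω) / 2 := by
  filter_upwards [AEEqFun.coeFn_smul (2 : ℝ)⁻¹ (a + b), AEEqFun.coeFn_add a b] with ω h hadd
  simp only [h, Pi.smul_apply, hadd, Pi.add_apply, smul_eq_mul]
  ring

lemma IsLocal.exists_brackets_half {f : L0 μ → L0 μ} (hf : IsLocal f) {ξ a b : L0 μ}
    (h : Brackets f ξ a b) :
    ∃ a' b', Brackets f ξ a' b' ∧ a ≤ a' ∧ b' ≤ b ∧ b' - a' = (2 : ℝ)⁻¹ • (b - a) := by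
  classical
  set m : L0 μ := (2 : ℝ)⁻¹ • (a + b)
  set A : Set Ω := {ω | ξ ω ∈ uIcc (f a ω) (f m ω)}
  have hA : MeasurableSet A :=
    (measurableSet_le ((f a).measurable.min (f m).measurable) ξ.measurable).inter
      (measurableSet_le ξ.measurable ((f a).measurable.max (f m).measurable))
  have hm : ∀ᵐ ω ∂μ, m ω = (a ω + b ω) / 2 := coeFn_midpoint a b
  have hab := AEEqFun.coeFn_le.2 h.1
  have ha' := coeFn_glue hA a m
  have hb' := coeFn_glue hA m b
  refine ⟨glue μ A a m, glue μ A m b, ⟨?_, ?_⟩, ?_, ?_, ?_⟩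
  · rw [← AEEqFun.coeFn_le]
    filter_upwards [hm, hab, ha', hb'] with ω hmω habω ha'ω hb'ω
    by_cases hω : ω ∈ A <;> simp [ha'ω, hb'ω, hω] <;> linarith
  · rw [hf.map_glue hA, hf.map_glue hA]
    filter_upwards [h.2, coeFn_glue hA (f a) (f m), coeFn_glue hA (f m) (f b)]
      with ω hξω hfa' hfb'
    rw [hfa', hfb']
    by_cases hω : ω ∈ A
    · rw [Set.piecewise_eq_of_mem _ _ _ hω, Set.piecewise_eq_of_mem _ _ _ hω]
      exact hω
    · rw [Set.piecewise_eq_of_notMem _ _ _ hω, Set.piecewise_eq_of_notMem _ _ _ hω]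
      exact (uIcc_subset_uIcc_union_uIcc hξω).resolve_left hω
  · rw [← AEEqFun.coeFn_le]
    filter_upwards [hm, hab, ha'] with ω hmω habω ha'ω
    by_cases hω : ω ∈ A <;> simp [ha'ω, hω]
    linarith
  · rw [← AEEqFun.coeFn_le]
    filter_upwards [hm, hab, hb'] with ω hmω habω hb'ω
    by_cases hω : ω ∈ A <;> simp [hb'ω, hω]
    linarith
  · rw [AEEqFun.ext_iff]
    filter_upwards [hm, ha', hb', AEEqFun.coeFn_sub (glue μ A m b) (glue μ A a m),
      AEEqFun.coeFn_smul (2 : ℝ)⁻¹ (b - a), AEEqFun.coeFn_sub b a]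
      with ω hmω ha'ω hb'ω hsub hsmul hba
    rw [hsub, hsmul, Pi.sub_apply, Pi.smul_apply, hba, Pi.sub_apply, smul_eq_mul]
    by_cases hω : ω ∈ A <;> simp [ha'ω, hb'ω, hω] <;> linarith

lemma IsLocal.exists_bisection {f : L0 μ → L0 μ} (hf : IsLocal f) {ξ Y₁ Y₂ : L0 μ}
    (h : Brackets f ξ Y₁ Y₂) :
    ∃ a b : ℕ → L0 μ, a 0 = Y₁ ∧ b 0 = Y₂ ∧ Monotone a ∧ Antitone b ∧
      (∀ n, Brackets f ξ (a n) (b n)) ∧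
      ∀ᵐ ω ∂μ, Tendsto (fun n => b n ω - a n ω) atTop (𝓝 0) := by
  choose! F G hFG using fun a b : L0 μ => hf.exists_brackets_half (ξ := ξ) (a := a) (b := b)
  set s : ℕ → L0 μ × L0 μ := fun n => (fun p => (F p.1 p.2, G p.1 p.2))^[n] (Y₁, Y₂)
  have hs (n : ℕ) : s (n + 1) = (F (s n).1 (s n).2, G (s n).1 (s n).2) :=
    Function.iterate_succ_apply' _ _ _
  have hbr (n : ℕ) : Brackets f ξ (s n).1 (s n).2 := by
    induction n with
    | zero => exact h
    | succ n ih => rw [hs]; exact (hFG _ _ ih).1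
  have hlen (n : ℕ) : (s n).2 - (s n).1 = ((2 : ℝ)⁻¹) ^ n • (Y₂ - Y₁) := by
    induction n with
    | zero => rw [pow_zero, one_smul]; rfl
    | succ n ih => rw [hs, (hFG _ _ (hbr n)).2.2.2, ih, smul_smul, ← pow_succ']
  refine ⟨fun n => (s n).1, fun n => (s n).2, rfl, rfl,
    monotone_nat_of_le_succ fun n => ?_, antitone_nat_of_succ_le fun n => ?_, hbr, ?_⟩
  · rw [hs]; exact (hFG _ _ (hbr n)).2.1
  · rw [hs]; exact (hFG _ _ (hbr n)).2.2.1
  · have hpow : Tendsto (fun n => ((2 : ℝ)⁻¹) ^ n) atTop (𝓝 0) :=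
      tendsto_pow_atTop_nhds_zero_of_lt_one (by norm_num) (by norm_num)
    have hlen_ae := ae_all_iff.2 fun n =>
      (AEEqFun.coeFn_sub (s n).2 (s n).1).symm.trans
        ((hlen n).symm ▸ AEEqFun.coeFn_smul (((2 : ℝ)⁻¹) ^ n) (Y₂ - Y₁))
    filter_upwards [hlen_ae, AEEqFun.coeFn_sub Y₂ Y₁] with ω hω hY
    simp only [Pi.sub_apply, Pi.smul_apply, smul_eq_mul] at hω hY
    simpa [hω] using hpow.mul_const ((Y₂ - Y₁) ω)

lemma exists_tendsto_of_nested {a b : ℕ → L0 μ} (ha : Monotone a) (hb : Antitone b)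
    (hab : ∀ n, a n ≤ b n) (hlen : ∀ᵐ ω ∂μ, Tendsto (fun n => b n ω - a n ω) atTop (𝓝 0)) :
    ∃ η : L0 μ, (∀ n, a n ≤ η ∧ η ≤ b n) ∧
      (∀ᵐ ω ∂μ, Tendsto (fun n => a n ω) atTop (𝓝 (η ω))) ∧
      ∀ᵐ ω ∂μ, Tendsto (fun n => b n ω) atTop (𝓝 (η ω)) := by
  have hmono : ∀ᵐ ω ∂μ, Monotone fun n => a n ω := by
    filter_upwards [ae_all_iff.2 fun n : ℕ => AEEqFun.coeFn_le.2 (ha n.le_succ)] with ω h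
    exact monotone_nat_of_le_succ h
  have hanti : ∀ᵐ ω ∂μ, Antitone fun n => b n ω := by
    filter_upwards [ae_all_iff.2 fun n : ℕ => AEEqFun.coeFn_le.2 (hb n.le_succ)] with ω h
    exact antitone_nat_of_succ_le h
  have hconv : ∀ᵐ ω ∂μ, Tendsto (fun n => a n ω) atTop (𝓝 (⨆ n, a n ω)) := by
    filter_upwards [hmono, hanti, ae_all_iff.2 fun n => AEEqFun.coeFn_le.2 (hab n)]
      with ω hmω hbω habω
    refine tendsto_atTop_ciSup hmω ⟨b 0 ω, ?_⟩
    rintro _ ⟨n, rfl⟩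
    exact (habω n).trans (hbω n.zero_le)
  have hmeas : AEMeasurable (fun ω => ⨆ n, a n ω) μ :=
    aemeasurable_of_tendsto_metrizable_ae atTop (fun n => (a n).measurable.aemeasurable) hconv
  set η : L0 μ := AEEqFun.mk _ hmeas.aestronglyMeasurable
  have ha_lim : ∀ᵐ ω ∂μ, Tendsto (fun n => a n ω) atTop (𝓝 (η ω)) := by
    filter_upwards [hconv, AEEqFun.coeFn_mk _ hmeas.aestronglyMeasurable] with ω h hη
    rwa [hη]
  have hb_lim : ∀ᵐ ω ∂μ, Tendsto (fun n => b n ω) atTop (𝓝 (η ω)) := by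
    filter_upwards [ha_lim, hlen] with ω ha hlen
    simpa using ha.add hlen
  refine ⟨η, fun n => ⟨?_, ?_⟩, ha_lim, hb_lim⟩
  · rw [← AEEqFun.coeFn_le]
    filter_upwards [hmono, ha_lim] with ω hmω h using hmω.ge_of_tendsto h n
  · rw [← AEEqFun.coeFn_le]
    filter_upwards [hanti, hb_lim] with ω hbω h using hbω.le_of_tendsto h n

/-- **Intermediate value theorem for continuous local functions on `L⁰(F,ℝ)`** (Theorem 1.1).
If `f : L⁰(F,ℝ) → L⁰(F,ℝ)` is local and continuous for the topology of convergence in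
probability, and `Y₁ ≤ Y₂`, then every `ξ ∈ [f(Y₁) ∧ f(Y₂), f(Y₁) ∨ f(Y₂)]` is attained
as `f(η)` for some `η ∈ [Y₁, Y₂]`. -/
theorem L0_intermediate_value {Ω : Type*} [MeasurableSpace Ω] (μ : Measure Ω)
    [IsProbabilityMeasure μ] (f : L0 μ → L0 μ)
    (hlocal : ∀ A : Set Ω, MeasurableSet A → ∀ x : L0 μ,
      ind μ A * f x = ind μ A * f (ind μ A * x))
    (hcont : ∀ (u : ℕ → L0 μ) (x : L0 μ), L0TendstoInProb μ u x →
      L0TendstoInProb μ (fun n => f (u n)) (f x))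
    (Y₁ Y₂ : L0 μ) (hY : Y₁ ≤ Y₂) (ξ : L0 μ)
    (hξ₁ : f Y₁ ⊓ f Y₂ ≤ ξ) (hξ₂ : ξ ≤ f Y₁ ⊔ f Y₂) :
    ∃ η : L0 μ, Y₁ ≤ η ∧ η ≤ Y₂ ∧ f η = ξ := by
  have hf : IsLocal f := hlocal
  obtain ⟨a, b, rfl, rfl, ha, hb, hbr, hlen⟩ := hf.exists_bisection (brackets_of_le hY hξ₁ hξ₂)
  obtain ⟨η, hη, ha_lim, hb_lim⟩ := exists_tendsto_of_nested ha hb (fun n => (hbr n).1) hlen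
  have hfa := L0TendstoInProb_iff.1 (hcont a η (L0TendstoInProb_of_ae_tendsto ha_lim))
  have hfb := L0TendstoInProb_iff.1 (hcont b η (L0TendstoInProb_of_ae_tendsto hb_lim))
  refine ⟨η, (hη 0).1, (hη 0).2, ?_⟩
  exact (AEEqFun.ext (ae_eq_of_mem_uIcc_of_tendstoInMeasure hfa hfb fun n => (hbr n).2)).symm

end RNM
end
end

section
/- Let S be a complete RN module over ℝ with base (Ω, F, P) admitting G(S) (i.e. P(G(S)) > 0), and let u ∈ S with ‖u‖ = I_{G(S)}. Then there exists v ∈ S with ‖v‖ = I_{G(S)} such that u and v are L⁰-independent on G(S). -/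
open MeasureTheory Filter Set

noncomputable section

namespace RNM

variable {Ω : Type*} [MeasurableSpace Ω]

variable {μ : Measure Ω} {S : Type*} [AddCommGroup S]

/-!
Take `x, y` independent on `G`. By exhaustion there are countable unions `B, B'` of parts of `G`
on which `x`, respectively `y`, is an `L⁰`-multiple of `u`, maximal up to null sets. On
`B ∩ B'` both `x` and `y` would be multiples of `u`, so `B ∩ B'` is null. Maximality makes `u`
independent of `x` on `G \ B` and of `y` on `B \ B'`, hence of
`w = I_{G \ B} x + I_{B \ B'} y` on `G`. Then `‖w‖ > 0` on `G`, and `v = (I_G / ‖w‖) w`.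
-/

section

variable {sm : L0 μ → S → S} {nrm : S → L0 μ} {A B C D E F G : Set Ω} {u w x y z : S}

-- Mathlib gives `Ω →ₘ[μ] ℝ` its additive group and multiplicative monoid, not its ring structure.
noncomputable instance : CommRing (L0 μ) :=
  letI : NatCast (L0 μ) := ⟨fun n => AEEqFun.const Ω (n : ℝ)⟩
  letI : IntCast (L0 μ) := ⟨fun n => AEEqFun.const Ω (n : ℝ)⟩
  AEEqFun.toGerm_injective.commRing _ AEEqFun.zero_toGerm AEEqFun.one_toGerm
    AEEqFun.add_toGerm AEEqFun.mul_toGerm AEEqFun.neg_toGerm AEEqFun.sub_toGerm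
    (fun _ _ => AEEqFun.smul_toGerm _ _) (fun _ _ => AEEqFun.smul_toGerm _ _)
    AEEqFun.pow_toGerm (fun _ => rfl) (fun _ => rfl)

lemma ind_coeFn (hA : MeasurableSet A) : ⇑(ind μ A) =ᵐ[μ] A.indicator 1 := by
  rw [ind, dif_pos hA]
  exact AEEqFun.coeFn_mk _ _

lemma ind_congr (hA : MeasurableSet A) (hB : MeasurableSet B) (h : A =ᵐ[μ] B) :
    ind μ A = ind μ B :=
  AEEqFun.ext <| (ind_coeFn hA).trans <|
    (indicator_ae_eq_of_ae_eq_set h).trans (ind_coeFn hB).symm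

lemma ind_empty : ind μ (∅ : Set Ω) = 0 :=
  AEEqFun.ext <| (ind_coeFn .empty).trans <| by
    rw [indicator_empty]
    exact AEEqFun.coeFn_zero.symm

lemma ind_inter (hA : MeasurableSet A) (hB : MeasurableSet B) :
    ind μ (A ∩ B) = ind μ A * ind μ B := by
  refine AEEqFun.ext ?_
  filter_upwards [ind_coeFn (hA.inter hB), ind_coeFn hA, ind_coeFn hB,
    AEEqFun.coeFn_mul (ind μ A) (ind μ B)] with ω h h₁ h₂ h₃
  rw [h, h₃, Pi.mul_apply, h₁, h₂, inter_indicator_one, Pi.mul_apply]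

lemma ind_mul_self (hA : MeasurableSet A) : ind μ A * ind μ A = ind μ A := by
  rw [← ind_inter hA hA, inter_self]

lemma ind_mul_of_subset (hA : MeasurableSet A) (hB : MeasurableSet B) (h : A ⊆ B) :
    ind μ A * ind μ B = ind μ A := by
  rw [← ind_inter hA hB, inter_eq_self_of_subset_left h]

lemma ind_union (hA : MeasurableSet A) (hB : MeasurableSet B) :
    ind μ (A ∪ B) = ind μ A + ind μ B - ind μ A * ind μ B := by
  rw [eq_sub_iff_add_eq, ← ind_inter hA hB]
  refine AEEqFun.ext ?_
  filter_upwards [ind_coeFn (hA.union hB), ind_coeFn (hA.inter hB), ind_coeFn hA, ind_coeFn hB,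
    AEEqFun.coeFn_add (ind μ (A ∪ B)) (ind μ (A ∩ B)),
    AEEqFun.coeFn_add (ind μ A) (ind μ B)] with ω h h' h₁ h₂ h₃ h₄
  rw [h₃, h₄, Pi.add_apply, Pi.add_apply, h, h', h₁, h₂, indicator_union_add_inter_apply]

lemma mul_ind_eq_zero_iff (hA : MeasurableSet A) {ξ : L0 μ} :
    ξ * ind μ A = 0 ↔ ∀ᵐ ω ∂μ, ω ∈ A → ξ ω = 0 := by
  have h : ⇑(ξ * ind μ A) =ᵐ[μ] fun ω => ξ ω * A.indicator 1 ω := by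
    filter_upwards [AEEqFun.coeFn_mul ξ (ind μ A), ind_coeFn hA] with ω h₁ h₂
    rw [h₁, Pi.mul_apply, h₂]
  rw [AEEqFun.ext_iff]
  constructor
  · intro h0
    filter_upwards [h, h0, AEEqFun.coeFn_zero (β := ℝ) (μ := μ)] with ω h₁ h₂ h₃ hω
    rwa [h₂, h₃, indicator_of_mem hω, Pi.one_apply, mul_one, eq_comm] at h₁
  · intro h0
    filter_upwards [h, h0, AEEqFun.coeFn_zero (β := ℝ) (μ := μ)] with ω h₁ h₂ h₃
    rw [h₁, h₃, Pi.zero_apply]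
    by_cases hω : ω ∈ A
    · rw [h₂ hω, zero_mul]
    · rw [indicator_of_notMem hω, mul_zero]

lemma measure_eq_zero_of_ind_eq_zero (hA : MeasurableSet A) (h : ind μ A = 0) : μ A = 0 := by
  rw [← one_mul (ind μ A), mul_ind_eq_zero_iff hA] at h
  rw [measure_eq_zero_iff_ae_notMem]
  filter_upwards [h, AEEqFun.coeFn_one (β := ℝ) (μ := μ)] with ω h₁ h₂ hω
  have h₃ := h₁ hω
  rw [h₂, Pi.one_apply] at h₃
  exact one_ne_zero h₃

lemma ae_pos_ind (hA : MeasurableSet A) : ∀ᵐ ω ∂μ, ω ∈ A → 0 < ind μ A ω := by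
  filter_upwards [ind_coeFn hA] with ω h hω
  rw [h, indicator_of_mem hω, Pi.one_apply]
  exact one_pos

lemma exists_coeFn_eq_inv (ξ : L0 μ) : ∃ ζ : L0 μ, ∀ᵐ ω ∂μ, ζ ω = (ξ ω)⁻¹ :=
  ⟨AEEqFun.compMeasurable _ measurable_inv ξ, AEEqFun.coeFn_compMeasurable _ _ ξ⟩

namespace IsRNModule

lemma zero_smul (hRN : IsRNModule μ sm nrm) (x : S) : sm 0 x = 0 :=
  (AddMonoidHom.mk' (sm · x) fun ξ η => hRN.add_smul ξ η x).map_zero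

lemma neg_smul (hRN : IsRNModule μ sm nrm) (ξ : L0 μ) (x : S) : sm (-ξ) x = -sm ξ x :=
  (AddMonoidHom.mk' (sm · x) fun ξ η => hRN.add_smul ξ η x).map_neg ξ

lemma sub_smul (hRN : IsRNModule μ sm nrm) (ξ η : L0 μ) (x : S) :
    sm (ξ - η) x = sm ξ x - sm η x :=
  (AddMonoidHom.mk' (sm · x) fun ξ η => hRN.add_smul ξ η x).map_sub ξ η

lemma smul_zero (hRN : IsRNModule μ sm nrm) (ξ : L0 μ) : sm ξ 0 = 0 :=
  (AddMonoidHom.mk' (sm ξ) (hRN.smul_add ξ)).map_zero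

lemma nrm_zero (hRN : IsRNModule μ sm nrm) : nrm 0 = 0 := by
  rw [← hRN.zero_smul 0, hRN.nrm_smul, abs, neg_zero, sup_idem, zero_mul]

lemma smul_eq_zero_iff (hRN : IsRNModule μ sm nrm) {ξ : L0 μ} {x : S} :
    sm ξ x = 0 ↔ |ξ| * nrm x = 0 :=
  ⟨fun h => by rw [← hRN.nrm_smul, h, hRN.nrm_zero],
    fun h => hRN.nrm_eq_zero _ (by rw [hRN.nrm_smul, h])⟩

lemma mul_ind_eq_zero_of_smul_eq_zero (hRN : IsRNModule μ sm nrm) (hA : MeasurableSet A)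
    {ξ : L0 μ} (hu : ∀ᵐ ω ∂μ, ω ∈ A → 0 < nrm u ω) (h : sm (ξ * ind μ A) u = 0) :
    ξ * ind μ A = 0 := by
  rw [hRN.smul_eq_zero_iff, AEEqFun.ext_iff] at h
  rw [mul_ind_eq_zero_iff hA]
  filter_upwards [h, hu, AEEqFun.coeFn_mul |ξ * ind μ A| (nrm u),
    AEEqFun.coeFn_abs (ξ * ind μ A), AEEqFun.coeFn_mul ξ (ind μ A), ind_coeFn hA,
    AEEqFun.coeFn_zero (β := ℝ) (μ := μ)] with ω h₀ hpos h₁ h₂ h₃ h₄ h₅ hω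
  rw [h₁, Pi.mul_apply, h₂, h₃, Pi.mul_apply, h₄, indicator_of_mem hω, Pi.one_apply, mul_one,
    h₅, Pi.zero_apply, mul_eq_zero, abs_eq_zero] at h₀
  exact h₀.resolve_right (hpos hω).ne'

lemma ind_smul_combination (hRN : IsRNModule μ sm nrm) (hA : MeasurableSet A)
    (hB : MeasurableSet B) (hAB : A ⊆ B) (ξ η : L0 μ) (x y : S) :
    sm (ind μ A) (sm (ξ * ind μ B) x + sm (η * ind μ B) y) =
      sm (ξ * ind μ A) x + sm (η * ind μ A) y := by
  simp only [hRN.smul_add, ← hRN.mul_smul, mul_left_comm (ind μ A),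
    ind_mul_of_subset hA hB hAB]

end IsRNModule

def IsMultipleOn (sm : L0 μ → S → S) (u z : S) (C : Set Ω) : Prop :=
  ∃ ξ : L0 μ, sm (ind μ C) z = sm ξ u

lemma isMultipleOn_empty (hRN : IsRNModule μ sm nrm) : IsMultipleOn sm u z ∅ :=
  ⟨0, by rw [ind_empty, hRN.zero_smul, hRN.zero_smul]⟩

lemma IsMultipleOn.union (hRN : IsRNModule μ sm nrm) (hC : MeasurableSet C)
    (hD : MeasurableSet D) (h₁ : IsMultipleOn sm u z C) (h₂ : IsMultipleOn sm u z D) :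
    IsMultipleOn sm u z (C ∪ D) := by
  obtain ⟨a, ha⟩ := h₁
  obtain ⟨b, hb⟩ := h₂
  refine ⟨a + b - ind μ C * b, ?_⟩
  rw [ind_union hC hD, hRN.sub_smul, hRN.add_smul, hRN.mul_smul, ha, hb, hRN.sub_smul,
    hRN.add_smul, hRN.mul_smul]

lemma IsMultipleOn.inter (hRN : IsRNModule μ sm nrm) (hC : MeasurableSet C)
    (hD : MeasurableSet D) (h : IsMultipleOn sm u z C) : IsMultipleOn sm u z (C ∩ D) := by
  obtain ⟨a, ha⟩ := h
  refine ⟨ind μ D * a, ?_⟩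
  rw [ind_inter hC hD, mul_comm, hRN.mul_smul, ha, hRN.mul_smul]

lemma Indep.of_ind_eq (h : Indep sm x y E) (hEF : ind μ E = ind μ F) : Indep sm x y F := by
  rwa [Indep, ← hEF]

lemma Indep.mono (h : Indep sm x y F) (hE : MeasurableSet E) (hF : MeasurableSet F)
    (hEF : E ⊆ F) : Indep sm x y E := by
  intro ξ η hξη
  have key (ζ : L0 μ) : ζ * ind μ E * ind μ F = ζ * ind μ E := by
    rw [mul_assoc, ind_mul_of_subset hE hF hEF]
  simpa only [key] using h (ξ * ind μ E) (η * ind μ E) (by simpa only [key] using hξη)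

lemma Indep.congr_right (hRN : IsRNModule μ sm nrm) (h : Indep sm u z E)
    (hzw : sm (ind μ E) z = sm (ind μ E) w) : Indep sm u w E := by
  intro ξ η hξη
  apply h ξ η
  rwa [hRN.mul_smul η, hzw, ← hRN.mul_smul]

lemma Indep.union (hRN : IsRNModule μ sm nrm) (hE : MeasurableSet E) (hF : MeasurableSet F)
    (h₁ : Indep sm u w E) (h₂ : Indep sm u w F) : Indep sm u w (E ∪ F) := by
  intro ξ η h
  have restrict {A : Set Ω} (hA : MeasurableSet A) (hAU : A ⊆ E ∪ F) :
      sm (ξ * ind μ A) u + sm (η * ind μ A) w = 0 := by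
    rw [← hRN.ind_smul_combination hA (hE.union hF) hAU, h, hRN.smul_zero]
  obtain ⟨hξE, hηE⟩ := h₁ ξ η (restrict hE subset_union_left)
  obtain ⟨hξF, hηF⟩ := h₂ ξ η (restrict hF subset_union_right)
  rw [ind_union hE hF]
  constructor
  · linear_combination (1 - ind μ F) * hξE + hξF
  · linear_combination (1 - ind μ F) * hηE + hηF

lemma Indep.piecewise (hRN : IsRNModule μ sm nrm) (hE : MeasurableSet E) (hF : MeasurableSet F)
    (hEF : Disjoint E F) (h₁ : Indep sm u x E) (h₂ : Indep sm u y F) :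
    Indep sm u (sm (ind μ E) x + sm (ind μ F) y) (E ∪ F) := by
  have hI : ind μ E * ind μ F = 0 := by rw [← ind_inter hE hF, hEF.inter_eq, ind_empty]
  refine (h₁.congr_right hRN ?_).union hRN hE hF (h₂.congr_right hRN ?_)
  · rw [hRN.smul_add, ← hRN.mul_smul, ← hRN.mul_smul, ind_mul_self hE, hI, hRN.zero_smul,
      add_zero]
  · rw [hRN.smul_add, ← hRN.mul_smul, ← hRN.mul_smul, ind_mul_self hF, mul_comm, hI,
      hRN.zero_smul, zero_add]

lemma Indep.measure_eq_zero_of_isMultipleOn (hRN : IsRNModule μ sm nrm) (hD : MeasurableSet D)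
    (h : Indep sm x y D) (hx : IsMultipleOn sm u x D) (hy : IsMultipleOn sm u y D) :
    μ D = 0 := by
  obtain ⟨a, ha⟩ := hx
  obtain ⟨b, hb⟩ := hy
  have hab : sm (b * ind μ D) x + sm (-a * ind μ D) y = 0 := by
    rw [hRN.mul_smul, hRN.mul_smul, ha, hb, ← hRN.mul_smul, ← hRN.mul_smul, ← hRN.add_smul,
      show b * a + -a * b = 0 by ring, hRN.zero_smul]
  have hxD : sm (ind μ D) x = 0 := by
    rw [← ind_mul_self hD, hRN.mul_smul, ha, ← hRN.mul_smul, mul_comm,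
      show a * ind μ D = -(-a * ind μ D) by ring, (h b (-a) hab).2, neg_zero, hRN.zero_smul]
  apply measure_eq_zero_of_ind_eq_zero hD
  simpa using (h 1 0 (by rw [one_mul, hxD, zero_mul, hRN.zero_smul, add_zero])).1

lemma mul_ind_eq_zero_of_mul_mul_ind_eq_zero (hE : MeasurableSet E) {ξ ζ : L0 μ}
    (hζ : ∀ᵐ ω ∂μ, ω ∈ E → ζ ω ≠ 0) (h : ξ * ζ * ind μ E = 0) : ξ * ind μ E = 0 := by
  rw [mul_ind_eq_zero_iff hE] at h ⊢
  filter_upwards [h, hζ, AEEqFun.coeFn_mul ξ ζ] with ω h₁ h₂ h₃ hω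
  rw [h₃, Pi.mul_apply] at h₁
  exact (mul_eq_zero.1 (h₁ hω)).resolve_right (h₂ hω)

/-- Dividing a relation between `u` and `z` by the coefficient of `z` exhibits a part of `E`
on which `z` is a multiple of `u`. -/
lemma indep_of_forall_isMultipleOn (hRN : IsRNModule μ sm nrm) (hE : MeasurableSet E)
    (hu : ∀ᵐ ω ∂μ, ω ∈ E → 0 < nrm u ω)
    (hz : ∀ C ⊆ E, MeasurableSet C → IsMultipleOn sm u z C → μ C = 0) : Indep sm u z E := by
  intro ξ η h
  obtain ⟨ζ, hζ⟩ := exists_coeFn_eq_inv η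
  set C := E ∩ {ω | η ω ≠ 0}
  have hC : MeasurableSet C := hE.inter (η.measurable (measurableSet_singleton 0).compl)
  have hζη : ζ * (η * ind μ E) = ind μ C := by
    refine AEEqFun.ext ?_
    filter_upwards [AEEqFun.coeFn_mul ζ (η * ind μ E), AEEqFun.coeFn_mul η (ind μ E), hζ,
      ind_coeFn hE, ind_coeFn hC] with ω h₁ h₂ h₃ h₄ h₅
    rw [h₁, Pi.mul_apply, h₂, Pi.mul_apply, h₃, h₄, h₅, inter_indicator_one, Pi.mul_apply,
      ← mul_assoc, mul_comm]
    by_cases hη : η ω = 0 <;> simp [hη]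
  have hCz : IsMultipleOn sm u z C := by
    refine ⟨-(ζ * (ξ * ind μ E)), ?_⟩
    have h' := congrArg (sm ζ) h
    rw [hRN.smul_add, ← hRN.mul_smul, ← hRN.mul_smul, hζη, hRN.smul_zero] at h'
    rw [hRN.neg_smul]
    exact eq_neg_of_add_eq_zero_right h'
  have hη : η * ind μ E = 0 := by
    rw [mul_ind_eq_zero_iff hE]
    filter_upwards [measure_eq_zero_iff_ae_notMem.1 (hz C inter_subset_left hC hCz)]
      with ω hω hωE
    by_contra hne
    exact hω ⟨hωE, hne⟩
  rw [hη, hRN.zero_smul, add_zero] at h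
  exact ⟨hRN.mul_ind_eq_zero_of_smul_eq_zero hE hu h, hη⟩

lemma indep_sdiff_of_forall_isMultipleOn (hRN : IsRNModule μ sm nrm) (hE : MeasurableSet E)
    (hB : MeasurableSet B) (hEG : E ⊆ G) (hu : ∀ᵐ ω ∂μ, ω ∈ G → 0 < nrm u ω)
    (hB_max : ∀ C, MeasurableSet C ∧ C ⊆ G ∧ IsMultipleOn sm u z C → μ (C \ B) = 0) :
    Indep sm u z (E \ B) :=
  indep_of_forall_isMultipleOn hRN (hE.diff hB) (hu.mono fun _ h hω => h (hEG hω.1))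
    fun C hC hCm hCz => by
      rw [← (disjoint_sdiff_left.mono_left hC).sdiff_eq_left]
      exact hB_max C ⟨hCm, hC.trans (sdiff_subset.trans hEG), hCz⟩

lemma Indep.ae_pos_nrm_right (hRN : IsRNModule μ sm nrm) (hG : MeasurableSet G)
    (h : Indep sm u w G) : ∀ᵐ ω ∂μ, ω ∈ G → 0 < nrm w ω := by
  set N := G ∩ {ω | nrm w ω = 0}
  have hN : MeasurableSet N := hG.inter ((nrm w).measurable (measurableSet_singleton 0))
  have hNw : sm (ind μ N) w = 0 := by
    rw [hRN.smul_eq_zero_iff]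
    refine AEEqFun.ext ?_
    filter_upwards [AEEqFun.coeFn_mul |ind μ N| (nrm w), AEEqFun.coeFn_abs (ind μ N),
      ind_coeFn hN, AEEqFun.coeFn_zero (β := ℝ) (μ := μ)] with ω h₁ h₂ h₃ h₄
    rw [h₁, Pi.mul_apply, h₂, h₃, h₄, Pi.zero_apply]
    by_cases hω : ω ∈ N
    · rw [hω.2, mul_zero]
    · rw [indicator_of_notMem hω, abs_zero, zero_mul]
  have hμN : μ N = 0 := by
    refine measure_eq_zero_of_ind_eq_zero hN ?_
    have hNG : ind μ N * ind μ G = ind μ N := ind_mul_of_subset hN hG inter_subset_left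
    simpa only [hNG] using (h 0 (ind μ N) (by rw [zero_mul, hRN.zero_smul, zero_add, hNG, hNw])).2
  filter_upwards [measure_eq_zero_iff_ae_notMem.1 hμN, AEEqFun.coeFn_le.2 (hRN.nrm_nonneg w),
    AEEqFun.coeFn_zero (β := ℝ) (μ := μ)] with ω hωN h₁ h₂ hω
  rw [h₂] at h₁
  exact h₁.lt_of_ne fun h0 => hωN ⟨hω, h0.symm⟩

lemma Indep.smul_right (hRN : IsRNModule μ sm nrm) (hG : MeasurableSet G) {ζ : L0 μ}
    (hζ : ∀ᵐ ω ∂μ, ω ∈ G → ζ ω ≠ 0) (h : Indep sm u w G) : Indep sm u (sm ζ w) G := by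
  intro ξ η hξη
  rw [← hRN.mul_smul, mul_right_comm] at hξη
  obtain ⟨hξ, hηζ⟩ := h ξ (η * ζ) hξη
  exact ⟨hξ, mul_ind_eq_zero_of_mul_mul_ind_eq_zero hG hζ hηζ⟩

lemma IsRNModule.exists_nrm_smul_eq_ind (hRN : IsRNModule μ sm nrm) (hG : MeasurableSet G)
    (hw : ∀ᵐ ω ∂μ, ω ∈ G → 0 < nrm w ω) :
    ∃ ζ : L0 μ, (∀ᵐ ω ∂μ, ω ∈ G → ζ ω ≠ 0) ∧ nrm (sm ζ w) = ind μ G := by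
  obtain ⟨ζ, hζ⟩ := exists_coeFn_eq_inv (nrm w)
  have hζG : ⇑(ζ * ind μ G) =ᵐ[μ] fun ω => (nrm w ω)⁻¹ * G.indicator 1 ω := by
    filter_upwards [AEEqFun.coeFn_mul ζ (ind μ G), hζ, ind_coeFn hG] with ω h₁ h₂ h₃
    rw [h₁, Pi.mul_apply, h₂, h₃]
  refine ⟨ζ * ind μ G, ?_, ?_⟩
  · filter_upwards [hζG, hw] with ω h₁ h₂ hω
    rw [h₁, indicator_of_mem hω, Pi.one_apply, mul_one]
    exact inv_ne_zero (h₂ hω).ne'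
  · rw [hRN.nrm_smul]
    refine AEEqFun.ext ?_
    filter_upwards [AEEqFun.coeFn_mul |ζ * ind μ G| (nrm w), AEEqFun.coeFn_abs (ζ * ind μ G),
      hζG, hw, ind_coeFn hG] with ω h₁ h₂ h₃ h₄ h₅
    rw [h₁, Pi.mul_apply, h₂, h₃, h₅]
    by_cases hω : ω ∈ G
    · rw [indicator_of_mem hω, Pi.one_apply, mul_one, abs_of_pos (inv_pos.2 (h₄ hω)),
        inv_mul_cancel₀ (h₄ hω).ne']
    · rw [indicator_of_notMem hω, mul_zero, abs_zero, zero_mul]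

lemma sdiff_union_sdiff_ae_eq (hBG : B ⊆ G) (h : μ (B ∩ C) = 0) :
    (G \ B ∪ B \ C : Set Ω) =ᵐ[μ] G := by
  rw [ae_eq_set, sdiff_eq_empty.2 (union_subset sdiff_subset (sdiff_subset.trans hBG))]
  refine ⟨measure_empty, measure_mono_null ?_ h⟩
  rintro ω ⟨hωG, hω⟩
  have hωB : ω ∈ B := by_contra fun h => hω (.inl ⟨hωG, h⟩)
  exact ⟨hωB, by_contra fun h => hω (.inr ⟨hωB, h⟩)⟩

lemma exists_seq_forall_measure_diff_iUnion_eq_zero [IsFiniteMeasure μ] {P : Set Ω → Prop}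
    (hP₀ : P ∅) (hPm : ∀ C, P C → MeasurableSet C) (hPu : ∀ C D, P C → P D → P (C ∪ D)) :
    ∃ A : ℕ → Set Ω, (∀ n, P (A n)) ∧ ∀ C, P C → μ (C \ ⋃ n, A n) = 0 := by
  obtain ⟨a, -, ha, haP⟩ := exists_seq_tendsto_sSup (S := μ '' {C | P C}) ⟨_, ∅, hP₀, rfl⟩
    (OrderTop.bddAbove _)
  choose A₀ hA₀ hμA₀ using haP
  have hA (n : ℕ) : P (accumulate A₀ n) := by
    induction n with
    | zero => simpa using hA₀ 0
    | succ n ih => rw [accumulate_succ]; exact hPu _ _ ih (hA₀ _)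
  refine ⟨accumulate A₀, hA, fun C hC => ?_⟩
  set B := ⋃ n, accumulate A₀ n
  have hB : MeasurableSet B := .iUnion fun n => hPm _ (hA n)
  have hsup_le : sSup (μ '' {C | P C}) ≤ μ B :=
    le_of_tendsto' ha fun n => hμA₀ n ▸ measure_mono
      (subset_accumulate.trans (subset_iUnion _ n))
  have hle_sup : μ (B ∪ C) ≤ sSup (μ '' {C | P C}) := by
    rw [iUnion_union, (monotone_accumulate.union monotone_const).measure_iUnion]
    exact iSup_le fun n => le_sSup ⟨_, hPu _ _ (hA n) hC, rfl⟩
  have h : μ B + μ (C \ B) ≤ μ B + 0 := by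
    rw [← measure_union' disjoint_sdiff_right hB, union_sdiff_self, add_zero]
    exact hle_sup.trans hsup_le
  exact nonpos_iff_eq_zero.1 ((ENNReal.add_le_add_iff_left (measure_ne_top μ B)).1 h)

lemma Indep.exists_indep_of_nrm_pos [IsFiniteMeasure μ] (hRN : IsRNModule μ sm nrm)
    (hG : MeasurableSet G) (hu : ∀ᵐ ω ∂μ, ω ∈ G → 0 < nrm u ω) (hxy : Indep sm x y G) :
    ∃ w, Indep sm u w G := by
  have exhaust (z : S) := exists_seq_forall_measure_diff_iUnion_eq_zero (μ := μ)
    (P := fun C => MeasurableSet C ∧ C ⊆ G ∧ IsMultipleOn sm u z C)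
    ⟨.empty, empty_subset G, isMultipleOn_empty hRN⟩ (fun _ hC => hC.1)
    fun _ _ hC hD =>
      ⟨hC.1.union hD.1, union_subset hC.2.1 hD.2.1, hC.2.2.union hRN hC.1 hD.1 hD.2.2⟩
  obtain ⟨A, hA, hAx⟩ := exhaust x
  obtain ⟨A', hA', hA'y⟩ := exhaust y
  set B := ⋃ n, A n
  set B' := ⋃ n, A' n
  have hB : MeasurableSet B := .iUnion fun n => (hA n).1
  have hB' : MeasurableSet B' := .iUnion fun n => (hA' n).1
  have hBG : B ⊆ G := iUnion_subset fun n => (hA n).2.1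
  have hBB' : μ (B ∩ B') = 0 := by
    rw [iUnion_inter_iUnion]
    refine measure_iUnion_null fun n => measure_iUnion_null fun m => ?_
    have hAA' := (hA n).1.inter (hA' m).1
    refine (hxy.mono hAA' hG (inter_subset_left.trans (hA n).2.1)).measure_eq_zero_of_isMultipleOn
      hRN hAA' ((hA n).2.2.inter hRN (hA n).1 (hA' m).1) ?_
    rw [inter_comm]
    exact (hA' m).2.2.inter hRN (hA' m).1 (hA n).1
  have hx : Indep sm u x (G \ B) := indep_sdiff_of_forall_isMultipleOn hRN hG hB subset_rfl hu hAx
  have hy : Indep sm u y (B \ B') := indep_sdiff_of_forall_isMultipleOn hRN hB hB' hBG hu hA'y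
  refine ⟨_, (hx.piecewise hRN (hG.diff hB) (hB.diff hB')
    (disjoint_sdiff_left.mono_right sdiff_subset) hy).of_ind_eq
    (ind_congr ((hG.diff hB).union (hB.diff hB')) hG (sdiff_union_sdiff_ae_eq hBG hBB'))⟩

end

theorem exists_independent_complement_general {Ω : Type*} [MeasurableSpace Ω] (μ : Measure Ω)
    [IsProbabilityMeasure μ] {S : Type*} [AddCommGroup S]
    (sm : L0 μ → S → S) (nrm : S → L0 μ) (hRN : IsRNModule μ sm nrm)
    (H : Set Ω)
    (G : Set Ω) (hG : IsGSet μ sm H G)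
    (u : S) (hu : nrm u = ind μ G) :
    ∃ v : S, nrm v = ind μ G ∧ Indep sm u v G := by
  obtain ⟨hGm, -, -, ⟨x, y, hxy⟩, -⟩ := hG
  obtain ⟨w, hw⟩ := hxy.exists_indep_of_nrm_pos hRN hGm (hu ▸ ae_pos_ind hGm)
  obtain ⟨ζ, hζ, hζw⟩ := hRN.exists_nrm_smul_eq_ind hGm (hw.ae_pos_nrm_right hRN hGm)
  exact ⟨sm ζ w, hζw, hw.smul_right hRN hGm hζ⟩

/-- **Proposition 2.3.** If `P(G(S)) > 0` and `‖u‖ = I_{G(S)}`, then there exists `v` with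
`‖v‖ = I_{G(S)}` such that `u` and `v` are `L⁰`-independent on `G(S)`. -/
theorem exists_independent_complement {Ω : Type*} [MeasurableSpace Ω] (μ : Measure Ω)
    [IsProbabilityMeasure μ] {S : Type*} [AddCommGroup S]
    (sm : L0 μ → S → S) (nrm : S → L0 μ) (hRN : IsRNModule μ sm nrm)
    (hcomp : CompleteRN μ nrm) (H : Set Ω) (hH : IsSupport nrm H)
    (G : Set Ω) (hG : IsGSet μ sm H G)
    (u : S) (hu : nrm u = ind μ G) :
    ∃ v : S, nrm v = ind μ G ∧ Indep sm u v G :=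
  exists_independent_complement_general μ sm nrm hRN H G hG u hu

end RNM
end
end
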